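/- arXiv:2501.09362 — 2 statements merged into one kernel-verified Lean document; each statement's English description precedes it below -/
import Mathlib

section
/- Let X and Y be Polish spaces, μ ∈ P(X), ν ∈ P(Y), β ≥ 0, and let ρ : X×Y → [0,∞] be measurable with K := (∫_{X×Y} e^{−βρ(x,y)} d(μ×ν))^{−1} ∈ (0,∞). Suppose a coupling π ∈ Π(μ,ν) satisfies dπ(x,y) = K f(x) g(y) e^{−βρ(x,y)} d(μ×ν)(x,y) for nonnegative measurable functions f : X → [0,∞) and g : Y → [0,∞). Then: (1) K f(x) ∫_Y g(y) e^{−βρ(x,y)} ν(dy) = 1 for μ-a.e. x; (2) K g(y) ∫_X f(x) e^{−βρ(x,y)} μ(dx) = 1 for ν-a.e. y; and consequently (3) ∫_X [ g(y') e^{−βρ(x,y')} / ∫_Y g(y) e^{−βρ(x,y)} ν(dy) ] μ(dx) = 1 for ν-a.e. y' (the Schrödinger equations). -/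
open MeasureTheory ProbabilityTheory Filter Topology ENNReal
open scoped Classical

/-- Relative entropy `H(p|q) = ∫ log (dp/dq) dp` if `p ≪ q` (and the integral
exists), `+∞` otherwise, with values in `EReal`. -/
noncomputable def relEnt {Ω : Type*} [MeasurableSpace Ω] (p q : Measure Ω) : EReal :=
  if p ≪ q ∧ Integrable (fun ω => Real.log (p.rnDeriv q ω).toReal) p
  then ((∫ ω, Real.log (p.rnDeriv q ω).toReal ∂p : ℝ) : EReal)
  else ⊤

/-- `π` is a coupling of `μ` and `ν`. -/
def IsCoupling {X Y : Type*} [MeasurableSpace X] [MeasurableSpace Y]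
    (π : Measure (X × Y)) (μ : Measure X) (ν : Measure Y) : Prop :=
  π.fst = μ ∧ π.snd = ν

/-- `e^{-β r}` for `r ∈ [0,∞]`. -/
noncomputable def expNegMul (β : ℝ) (r : ℝ≥0∞) : ℝ≥0∞ :=
  if r = ⊤ ∧ β ≠ 0 then 0 else ENNReal.ofReal (Real.exp (-(β * r.toReal)))

/-- The rate-distortion function. -/
noncomputable def RD {X Y : Type*} [MeasurableSpace X] [MeasurableSpace Y]
    (μ : Measure X) (ρ : X × Y → ℝ≥0∞) (D : ℝ) : EReal :=
  ⨅ (ν : Measure Y) (_ : IsProbabilityMeasure ν) (π : Measure (X × Y))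
    (_ : IsCoupling π μ ν) (_ : ∫⁻ q, ρ q ∂π ≤ ENNReal.ofReal D),
    relEnt π (μ.prod ν)

noncomputable def Dmin {X Y : Type*} [MeasurableSpace X] [MeasurableSpace Y]
    (μ : Measure X) (ρ : X × Y → ℝ≥0∞) : ℝ :=
  sInf {D : ℝ | 0 ≤ D ∧ RD μ ρ D < ⊤}

/-- `p` has finite `t`-th moment. -/
def FiniteMoment {Y : Type*} [MeasurableSpace Y] [PseudoMetricSpace Y]
    (t : ℝ) (y₀ : Y) (p : Measure Y) : Prop :=
  ∫⁻ y, ENNReal.ofReal (dist y y₀ ^ t) ∂p ≠ ⊤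

/-- Convergence in `P_t(Y)`: integrals of continuous functions dominated by a
multiple of `1 + d(y,y₀)^t` converge. -/
def PtTendsto {Y : Type*} [MeasurableSpace Y] [PseudoMetricSpace Y]
    (t : ℝ) (y₀ : Y) (pk : ℕ → Measure Y) (p : Measure Y) : Prop :=
  ∀ f : Y → ℝ, Continuous f →
    (∃ Cf : ℝ, ∀ y, |f y| ≤ Cf * (1 + dist y y₀ ^ t)) →
    Tendsto (fun k => ∫ y, f y ∂(pk k)) atTop (𝓝 (∫ y, f y ∂p))

/-- the cost `C(x,p) = H(p|ν) + β ∫ (ρ(x,y) - D) p(dy)`. -/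
noncomputable def Cfun {X Y : Type*} [MeasurableSpace Y]
    (ν : Measure Y) (β D : ℝ) (ρ : X × Y → ℝ≥0∞) (x : X) (p : Measure Y) : EReal :=
  relEnt p ν + (β : EReal) * (((∫⁻ y, ρ (x, y) ∂p : ℝ≥0∞) : EReal) - ((D : ℝ) : EReal))

/-- Schrödinger equations for a coupling of product-density form
`dπ = K f(x) g(y) e^{−βρ} d(μ×ν)`. -/
theorem schroedinger_equations {X Y : Type*}
    [MeasurableSpace X] [TopologicalSpace X] [PolishSpace X] [BorelSpace X]
    [MeasurableSpace Y] [TopologicalSpace Y] [PolishSpace Y] [BorelSpace Y]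
    (μ : Measure X) [IsProbabilityMeasure μ] (ν : Measure Y) [IsProbabilityMeasure ν]
    (β : ℝ) (hβ : 0 ≤ β)
    (ρ : X × Y → ℝ≥0∞) (hρ : Measurable ρ)
    (K : ℝ≥0∞) (hK : K = (∫⁻ q, expNegMul β (ρ q) ∂(μ.prod ν))⁻¹)
    (hK0 : K ≠ 0) (hKtop : K ≠ ⊤)
    (f : X → ℝ) (g : Y → ℝ) (hf : Measurable f) (hg : Measurable g)
    (hf0 : ∀ x, 0 ≤ f x) (hg0 : ∀ y, 0 ≤ g y)
    (π : Measure (X × Y)) (hπ : IsCoupling π μ ν)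
    (hπd : π = (μ.prod ν).withDensity fun q =>
      K * ENNReal.ofReal (f q.1) * ENNReal.ofReal (g q.2) * expNegMul β (ρ q)) :
    (∀ᵐ x ∂μ,
      K * ENNReal.ofReal (f x)
        * ∫⁻ y, ENNReal.ofReal (g y) * expNegMul β (ρ (x, y)) ∂ν = 1) ∧
    (∀ᵐ y ∂ν,
      K * ENNReal.ofReal (g y)
        * ∫⁻ x, ENNReal.ofReal (f x) * expNegMul β (ρ (x, y)) ∂μ = 1) ∧
    (∀ᵐ y' ∂ν,
      ∫⁻ x, ENNReal.ofReal (g y') * expNegMul β (ρ (x, y'))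
          / (∫⁻ y, ENNReal.ofReal (g y) * expNegMul β (ρ (x, y)) ∂ν) ∂μ = 1) := by
  classical
  -- measurability of the exponential factor
  have hEm : Measurable (expNegMul β) := by
    have hset : MeasurableSet {r : ℝ≥0∞ | r = ⊤ ∧ β ≠ 0} := by
      by_cases hb : β = 0
      · simp [hb]
      · have : {r : ℝ≥0∞ | r = ⊤ ∧ β ≠ 0} = {⊤} := by ext r; simp [hb]
        rw [this]; exact measurableSet_singleton _
    unfold expNegMul
    exact Measurable.ite hset measurable_const
      ((ENNReal.measurable_ofReal.comp Real.measurable_exp).comp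
        ((ENNReal.measurable_toReal.const_mul β).neg))
  have hE : Measurable fun q : X × Y => expNegMul β (ρ q) := hEm.comp hρ
  set F : X → ℝ≥0∞ := fun x => ENNReal.ofReal (f x) with hF
  set G : Y → ℝ≥0∞ := fun y => ENNReal.ofReal (g y) with hG
  have hFm : Measurable F := ENNReal.measurable_ofReal.comp hf
  have hGm : Measurable G := ENNReal.measurable_ofReal.comp hg
  set E : X × Y → ℝ≥0∞ := fun q => expNegMul β (ρ q) with hEdef
  set d : X × Y → ℝ≥0∞ := fun q => K * F q.1 * G q.2 * E q with hd
  have hdm : Measurable d := (((measurable_const.mul (hFm.comp measurable_fst)).mul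
    (hGm.comp measurable_snd)).mul hE)
  set I : X → ℝ≥0∞ := fun x => ∫⁻ y, G y * E (x, y) ∂ν with hI
  set J : Y → ℝ≥0∞ := fun y => ∫⁻ x, F x * E (x, y) ∂μ with hJ
  have hIEm : Measurable fun q : X × Y => G q.2 * E q :=
    (hGm.comp measurable_snd).mul hE
  have hJEm : Measurable fun q : X × Y => F q.1 * E q :=
    (hFm.comp measurable_fst).mul hE
  have hIm : Measurable I := hIEm.lintegral_prod_right'
  have hJm : Measurable J := by
    have := hIEm
    exact Measurable.lintegral_prod_left hJEm
  -- first marginal identity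
  have h1 : ∀ᵐ x ∂μ, K * F x * I x = 1 := by
    have key : ∀ A : Set X, MeasurableSet A →
        ∫⁻ x in A, K * F x * I x ∂μ = μ A := by
      intro A hA
      have h1' : π.fst A = μ A := by rw [hπ.1]
      rw [Measure.fst_apply hA, hπd, withDensity_apply _ (hA.preimage measurable_fst)] at h1'
      have hpre : Prod.fst ⁻¹' A = A ×ˢ (Set.univ : Set Y) := by
        ext q; simp
      rw [hpre, ← Measure.restrict_prod_eq_prod_univ] at h1'
      rw [← h1', MeasureTheory.lintegral_prod _ hdm.aemeasurable]
      refine lintegral_congr fun x => ?_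
      simp only [hd]
      calc K * F x * I x
          = (K * F x) * ∫⁻ y, G y * E (x, y) ∂ν := rfl
        _ = ∫⁻ y, (K * F x) * (G y * E (x, y)) ∂ν :=
            (lintegral_const_mul _
              (hIEm.comp measurable_prodMk_left : Measurable fun y => G y * E (x, y))).symm
        _ = ∫⁻ y, K * F x * G y * E (x, y) ∂ν := lintegral_congr fun y => by ring
    have := ae_eq_of_forall_setLIntegral_eq_of_sigmaFinite
      ((measurable_const.mul hFm).mul hIm) (measurable_const : Measurable fun _ : X => (1 : ℝ≥0∞))
      (fun s hs _ => by
        show ∫⁻ x in s, K * F x * I x ∂μ = ∫⁻ x in s, 1 ∂μ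
        rw [key s hs, setLIntegral_one])
    exact this
  have h2 : ∀ᵐ y ∂ν, K * G y * J y = 1 := by
    have key : ∀ B : Set Y, MeasurableSet B →
        ∫⁻ y in B, K * G y * J y ∂ν = ν B := by
      intro B hB
      have h2' : π.snd B = ν B := by rw [hπ.2]
      rw [Measure.snd_apply hB, hπd, withDensity_apply _ (hB.preimage measurable_snd)] at h2'
      have hpre : Prod.snd ⁻¹' B = (Set.univ : Set X) ×ˢ B := by
        ext q; simp
      have hres : (μ.prod ν).restrict (Set.univ ×ˢ B) = μ.prod (ν.restrict B) := by
        rw [← Measure.prod_restrict, Measure.restrict_univ]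
      rw [hpre, hres] at h2'
      rw [← h2', MeasureTheory.lintegral_prod_symm _ hdm.aemeasurable]
      refine lintegral_congr fun y => ?_
      simp only [hd]
      calc K * G y * J y
          = (K * G y) * ∫⁻ x, F x * E (x, y) ∂μ := rfl
        _ = ∫⁻ x, (K * G y) * (F x * E (x, y)) ∂μ :=
            (lintegral_const_mul _
              (hJEm.comp measurable_prodMk_right : Measurable fun x => F x * E (x, y))).symm
        _ = ∫⁻ x, K * F x * G y * E (x, y) ∂μ := lintegral_congr fun x => by ring
    have := ae_eq_of_forall_setLIntegral_eq_of_sigmaFinite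
      ((measurable_const.mul hGm).mul hJm) (measurable_const : Measurable fun _ : Y => (1 : ℝ≥0∞))
      (fun s hs _ => by
        show ∫⁻ y in s, K * G y * J y ∂ν = ∫⁻ y in s, 1 ∂ν
        rw [key s hs, setLIntegral_one])
    exact this
  refine ⟨h1, h2, ?_⟩
  -- Part 3
  have hinv : ∀ᵐ x ∂μ, (I x)⁻¹ = K * F x := by
    filter_upwards [h1] with x hx
    have hI0 : I x ≠ 0 := by
      intro h; rw [h, mul_zero] at hx; exact zero_ne_one hx
    have hItop : I x ≠ ⊤ := by
      intro h
      rw [h] at hx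
      rcases eq_or_ne (K * F x) 0 with h0 | h0
      · rw [h0, zero_mul] at hx; exact zero_ne_one hx
      · rw [ENNReal.mul_top h0] at hx; exact (ENNReal.top_ne_one hx)
    calc (I x)⁻¹ = (K * F x * I x) * (I x)⁻¹ := by rw [hx, one_mul]
      _ = K * F x * (I x * (I x)⁻¹) := by ring
      _ = K * F x := by rw [ENNReal.mul_inv_cancel hI0 hItop, mul_one]
  filter_upwards [h2] with y' hy'
  have hcong : ∫⁻ x, G y' * E (x, y') / I x ∂μ
      = ∫⁻ x, (K * G y') * (F x * E (x, y')) ∂μ := by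
    refine lintegral_congr_ae ?_
    filter_upwards [hinv] with x hx
    rw [div_eq_mul_inv, hx]
    ring
  calc ∫⁻ x, G y' * E (x, y') / I x ∂μ
      = ∫⁻ x, (K * G y') * (F x * E (x, y')) ∂μ := hcong
    _ = (K * G y') * J y' :=
        lintegral_const_mul _
          (hJEm.comp measurable_prodMk_right : Measurable fun x => F x * E (x, y'))
    _ = 1 := hy'
end

section
/- Let X and Y be Polish spaces, μ ∈ P(X), and let ρ : X×Y → [0,∞] be a measurable loss function with inf_{y∈Y} ρ(x,y) = 0 for every x ∈ X, and such that there exist ν₀ ∈ P(Y) and π₀ ∈ Π(μ,ν₀) with H(π₀ | μ×ν₀) < ∞ and ∫ρ dπ₀ < ∞. Suppose that for every ε > 0 there exist measurable subsets A₁ ⊂ A₂ ⊂ ⋯ of X and finite subsets B₁ ⊂ B₂ ⊂ ⋯ of Y such that μ(Aₙ) → 1 as n → ∞ and min_{y ∈ Bₙ} ρ(x,y) < ε for all x ∈ Aₙ and all n. Then the rate-distortion function satisfies R(D) < ∞ for every D > 0; that is, D_min = 0. -/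
open MeasureTheory ProbabilityTheory Filter Topology ENNReal
open scoped Classical

lemma myWithDensity_finsetSum {α ι : Type*} [MeasurableSpace α] (μ : Measure α) (s : Finset ι)
    (f : ι → α → ℝ≥0∞) (hf : ∀ i ∈ s, Measurable (f i)) :
    μ.withDensity (fun a => ∑ i ∈ s, f i a) = ∑ i ∈ s, μ.withDensity (f i) := by
  induction s using Finset.induction with
  | empty => simp
  | @insert a s ha ih =>
    rw [Finset.sum_insert ha]
    have h1 : Measurable (f a) := hf a (Finset.mem_insert_self a s)
    have : μ.withDensity (fun x => ∑ i ∈ insert a s, f i x)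
        = μ.withDensity (f a + fun x => ∑ i ∈ s, f i x) := by
      congr 1; ext x; simp [Finset.sum_insert ha]
    rw [this, withDensity_add_left h1,
      ih (fun i hi => hf i (Finset.mem_insert_of_mem hi))]

/-- second marginal of a density against a product measure -/
lemma mySnd_withDensity {X Y : Type*} [MeasurableSpace X] [MeasurableSpace Y]
    (μ : Measure X) (ν₀ : Measure Y) [SFinite μ] [SFinite ν₀]
    {g : X × Y → ℝ≥0∞} (hg : Measurable g) :
    ((μ.prod ν₀).withDensity g).snd = ν₀.withDensity (fun y => ∫⁻ x, g (x, y) ∂μ) := by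
  ext s hs
  have hpre : Prod.snd ⁻¹' s = (Set.univ : Set X) ×ˢ s := by ext p; simp
  rw [Measure.snd_apply hs, hpre,
    withDensity_apply _ (MeasurableSet.univ.prod hs),
    withDensity_apply _ hs]
  rw [← Measure.prod_restrict, Measure.restrict_univ,
    lintegral_prod_symm _ hg.aemeasurable]

/-- density of a product with a dirac -/
lemma myDiracProdDensity {X Y : Type*} [MeasurableSpace X] [MeasurableSpace Y]
    [MeasurableSingletonClass Y]
    (μ : Measure X) (ν : Measure Y) [IsFiniteMeasure μ] [IsFiniteMeasure ν]
    (S : Set X) (hS : MeasurableSet S) (y : Y) (hle : μ S ≤ ν {y}) :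
    (μ.prod ν).withDensity
      (fun p => S.indicator (fun _ => (1:ℝ≥0∞)) p.1 * ({y} : Set Y).indicator (fun _ => (ν {y})⁻¹) p.2)
      = (μ.restrict S).prod (Measure.dirac y) := by
  set c : ℝ≥0∞ := ν {y} with hc
  set k : X × Y → ℝ≥0∞ :=
    fun p => S.indicator (fun _ => (1:ℝ≥0∞)) p.1 * ({y} : Set Y).indicator (fun _ => c⁻¹) p.2
    with hk
  have hkmeas : Measurable k := by
    apply Measurable.mul
    · exact ((measurable_const.indicator hS).comp measurable_fst)
    · exact ((measurable_const.indicator (measurableSet_singleton y)).comp measurable_snd)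
  ext E hE
  rw [withDensity_apply _ hE, ← lintegral_indicator hE, Measure.prod_apply hE,
    lintegral_prod _ (hkmeas.indicator hE).aemeasurable]
  have hinner : ∀ x : X, ∫⁻ y', E.indicator k (x, y') ∂ν
      = S.indicator (fun _ => (1:ℝ≥0∞)) x * (c * (c⁻¹ * E.indicator (fun _ => (1:ℝ≥0∞)) (x, y))) := by
    intro x
    have h1 : ∀ y' : Y, E.indicator k (x, y')
        = S.indicator (fun _ => (1:ℝ≥0∞)) x *
          ({y} : Set Y).indicator (fun y' => c⁻¹ * E.indicator (fun _ => (1:ℝ≥0∞)) (x, y')) y' := by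
      intro y'
      by_cases hyy : y' = y <;> by_cases hEE : (x, y') ∈ E
      · rw [hyy] at hEE; simp [hk, hyy, hEE, Set.indicator_of_mem, Set.indicator_of_notMem, Pi.single_apply]
      · rw [hyy] at hEE; simp [hk, hyy, hEE, Set.indicator_of_mem, Set.indicator_of_notMem, Pi.single_apply]
      · simp [hk, hyy, hEE, Set.indicator_of_mem, Set.indicator_of_notMem, Pi.single_apply]
      · simp [hk, hyy, hEE, Set.indicator_of_mem, Set.indicator_of_notMem, Pi.single_apply]
    simp_rw [h1]
    rw [lintegral_const_mul' _ _ (by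
      by_cases hxS : x ∈ S <;> simp [hxS])]
    congr 1
    rw [lintegral_indicator (measurableSet_singleton y), Measure.restrict_singleton,
      lintegral_smul_measure, lintegral_dirac' _ (by
        exact measurable_const.mul ((measurable_const.indicator hE).comp measurable_prodMk_left)), smul_eq_mul]
  simp_rw [hinner]
  have hdirac : ∀ x : X, (Measure.dirac y) (Prod.mk x ⁻¹' E)
      = E.indicator (fun _ => (1:ℝ≥0∞)) (x, y) := by
    intro x
    rw [Measure.dirac_apply' _ (measurable_prodMk_left hE)]
    by_cases hEE : (x, y) ∈ E <;> simp [hEE]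
  have hrhs : ∫⁻ x, (Measure.dirac y) (Prod.mk x ⁻¹' E) ∂(μ.restrict S)
      = ∫⁻ x, S.indicator (fun x => E.indicator (fun _ => (1:ℝ≥0∞)) (x, y)) x ∂μ := by
    simp_rw [hdirac]
    exact (lintegral_indicator hS _).symm
  rw [hrhs]
  by_cases hc0 : c = 0
  · have hS0 : μ S = 0 := le_antisymm (hc0 ▸ hle) zero_le
    have h2 : ∫⁻ x, S.indicator (fun x => E.indicator (fun _ => (1:ℝ≥0∞)) (x, y)) x ∂μ = 0 := by
      rw [lintegral_indicator hS _]
      refine le_antisymm ?_ zero_le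
      calc ∫⁻ x in S, E.indicator (fun _ => (1:ℝ≥0∞)) (x, y) ∂μ
          ≤ ∫⁻ _ in S, 1 ∂μ := setLIntegral_mono measurable_const
            (fun x _ => by by_cases h : (x, y) ∈ E <;> simp [h])
        _ = μ S := by simp
        _ = 0 := hS0
    rw [h2]
    simp [hc0]
  · have hctop : c ≠ ⊤ := measure_ne_top ν {y}
    refine lintegral_congr fun x => ?_
    rw [← mul_assoc c, ENNReal.mul_inv_cancel hc0 hctop, one_mul]
    by_cases hxS : x ∈ S <;> simp [hxS]

lemma myIntLogDensity {Y : Type*} [MeasurableSpace Y] (ν₀ : Measure Y) [IsFiniteMeasure ν₀]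
    {h : Y → ℝ≥0∞} (hh : Measurable h) (hh1 : ∀ᵐ y ∂ν₀, h y ≤ 1) :
    Integrable (fun y => Real.log (h y).toReal) (ν₀.withDensity h) := by
  refine ⟨(Real.measurable_log.comp hh.ennreal_toReal).aestronglyMeasurable, ?_⟩
  have hmeas2 : Measurable fun y => (‖Real.log (h y).toReal‖₊ : ℝ≥0∞) :=
    measurable_coe_nnreal_ennreal.comp ((Real.measurable_log.comp hh.ennreal_toReal).nnnorm)
  have hwd : ∫⁻ y, (‖Real.log (h y).toReal‖₊ : ℝ≥0∞) ∂(ν₀.withDensity h)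
      = ∫⁻ y, (h * fun y => (‖Real.log (h y).toReal‖₊ : ℝ≥0∞)) y ∂ν₀ :=
    lintegral_withDensity_eq_lintegral_mul ν₀ hh hmeas2
  rw [HasFiniteIntegral]
  rw [show (fun a => ‖Real.log (h a).toReal‖ₑ) = fun y => (‖Real.log (h y).toReal‖₊ : ℝ≥0∞) from rfl, hwd]
  have hbound : ∀ᵐ y ∂ν₀,
      (h * fun y => (‖Real.log (h y).toReal‖₊ : ℝ≥0∞)) y ≤ 1 := by
    filter_upwards [hh1] with y hy
    have hyt : h y ≠ ⊤ := (lt_of_le_of_lt hy (by norm_num)).ne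
    set t : ℝ := (h y).toReal with ht
    have ht0 : 0 ≤ t := ENNReal.toReal_nonneg
    have ht1 : t ≤ 1 := by
      rw [ht]
      exact ENNReal.toReal_le_of_le_ofReal one_pos.le (by simpa using hy)
    have hkey : t * |Real.log t| ≤ 1 := by
      rcases eq_or_lt_of_le ht0 with h0 | h0
      · simp [← h0]
      · have := (Real.abs_log_mul_self_lt t h0 ht1).le
        rwa [abs_mul, abs_of_pos h0, mul_comm] at this
    have hcoe : h y = ENNReal.ofReal t := (ENNReal.ofReal_toReal hyt).symm
    calc (h * fun y => (‖Real.log (h y).toReal‖₊ : ℝ≥0∞)) y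
        = h y * ENNReal.ofReal |Real.log t| := by
          rw [Pi.mul_apply, ← enorm_eq_nnnorm, Real.enorm_eq_ofReal_abs]
      _ = ENNReal.ofReal t * ENNReal.ofReal |Real.log t| := by rw [← hcoe]
      _ = ENNReal.ofReal (t * |Real.log t|) := (ENNReal.ofReal_mul ht0).symm
      _ ≤ ENNReal.ofReal 1 := ENNReal.ofReal_le_ofReal hkey
      _ = 1 := ENNReal.ofReal_one
  calc ∫⁻ y, (h * fun y => (‖Real.log (h y).toReal‖₊ : ℝ≥0∞)) y ∂ν₀
      ≤ ∫⁻ _, 1 ∂ν₀ := lintegral_mono_ae hbound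
    _ < ⊤ := by simpa using measure_lt_top ν₀ Set.univ

lemma myPart2Density {X Y : Type*} [MeasurableSpace X] [MeasurableSpace Y]
    (μ : Measure X) (ν₀ ν : Measure Y) [IsProbabilityMeasure μ] [IsProbabilityMeasure ν₀]
    [IsFiniteMeasure ν] {g : X × Y → ℝ≥0∞} (hg : Measurable g)
    (hle : ((μ.prod ν₀).withDensity g).snd ≤ ν)
    (hh1 : ∀ᵐ y ∂ν₀, (∫⁻ x, g (x, y) ∂μ) ≤ 1) :
    (μ.prod ν).withDensity (fun p => g p * ((∫⁻ x, g (x, p.2) ∂μ)⁻¹ *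
        (((μ.prod ν₀).withDensity g).snd.rnDeriv ν p.2)))
      = (μ.prod ν₀).withDensity g := by
  set h : Y → ℝ≥0∞ := fun y => ∫⁻ x, g (x, y) ∂μ with hhdef
  have hh : Measurable h := Measurable.lintegral_prod_left (f := fun x y => g (x, y)) (by exact hg)
  set ν₂ := ((μ.prod ν₀).withDensity g).snd with hν₂def
  have hν₂ : ν₂ = ν₀.withDensity h := mySnd_withDensity μ ν₀ hg
  set w : Y → ℝ≥0∞ := ν₂.rnDeriv ν with hwdef
  have hw : Measurable w := Measure.measurable_rnDeriv _ _
  have hac₂ : ν₂ ≪ ν := Measure.absolutelyContinuous_of_le hle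
  haveI : IsFiniteMeasure ν₂ := by
    constructor
    exact lt_of_le_of_lt (Measure.le_iff'.1 hle Set.univ) (measure_lt_top ν _)
  have hwd : ν.withDensity w = ν₂ := Measure.withDensity_rnDeriv_eq _ _ hac₂
  ext E hE
  rw [withDensity_apply _ hE, withDensity_apply _ hE,
    ← lintegral_indicator hE, ← lintegral_indicator hE]
  have hEg : Measurable (E.indicator g) := hg.indicator hE
  have hind : ∀ p : X × Y, E.indicator (fun p => g p * ((h p.2)⁻¹ * w p.2)) p
      = E.indicator g p * ((h p.2)⁻¹ * w p.2) := by
    intro p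
    by_cases hp : p ∈ E <;> simp [hp]
  calc ∫⁻ p, E.indicator (fun p => g p * ((h p.2)⁻¹ * w p.2)) p ∂(μ.prod ν)
      = ∫⁻ p, E.indicator g p * ((h p.2)⁻¹ * w p.2) ∂(μ.prod ν) := by
        exact lintegral_congr hind
    _ = ∫⁻ y, ∫⁻ x, E.indicator g (x, y) * ((h y)⁻¹ * w y) ∂μ ∂ν := by
        exact lintegral_prod_symm _ (by fun_prop)
    _ = ∫⁻ y, (∫⁻ x, E.indicator g (x, y) ∂μ) * ((h y)⁻¹ * w y) ∂ν := by
        refine lintegral_congr fun y => ?_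
        exact lintegral_mul_const _ (hEg.comp measurable_prodMk_right)
    _ = ∫⁻ y, w y * ((∫⁻ x, E.indicator g (x, y) ∂μ) * (h y)⁻¹) ∂ν := by
        refine lintegral_congr fun y => ?_; ring
    _ = ∫⁻ y, (∫⁻ x, E.indicator g (x, y) ∂μ) * (h y)⁻¹ ∂(ν.withDensity w) := by
        exact (lintegral_withDensity_eq_lintegral_mul ν hw
          ((Measurable.lintegral_prod_left (f := fun x y => E.indicator g (x, y))
            (by exact hEg)).mul hh.inv)).symm
    _ = ∫⁻ y, (∫⁻ x, E.indicator g (x, y) ∂μ) * (h y)⁻¹ ∂(ν₀.withDensity h) := by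
        rw [hwd, hν₂]
    _ = ∫⁻ y, h y * ((∫⁻ x, E.indicator g (x, y) ∂μ) * (h y)⁻¹) ∂ν₀ := by
        exact lintegral_withDensity_eq_lintegral_mul ν₀ hh
          ((Measurable.lintegral_prod_left (f := fun x y => E.indicator g (x, y))
            (by exact hEg)).mul hh.inv)
    _ = ∫⁻ y, ∫⁻ x, E.indicator g (x, y) ∂μ ∂ν₀ := by
        refine lintegral_congr_ae ?_
        filter_upwards [hh1] with y hy
        have hFh : (∫⁻ x, E.indicator g (x, y) ∂μ) ≤ h y :=
          lintegral_mono fun x => Set.indicator_le_self _ _ _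
        by_cases hy0 : h y = 0
        · have : (∫⁻ x, E.indicator g (x, y) ∂μ) = 0 :=
            le_antisymm (hy0 ▸ hFh) zero_le
          simp [this]
        · have hytop : h y ≠ ⊤ := (lt_of_le_of_lt hy (by norm_num)).ne
          rw [mul_left_comm, ENNReal.mul_inv_cancel hy0 hytop, mul_one]
    _ = ∫⁻ p, E.indicator g p ∂(μ.prod ν₀) := (lintegral_prod_symm _ hEg.aemeasurable).symm

lemma myAEPosWithDensity {Y : Type*} [MeasurableSpace Y] (ν₀ : Measure Y)
    {h : Y → ℝ≥0∞} (hh : Measurable h) : ∀ᵐ y ∂(ν₀.withDensity h), 0 < h y := by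
  rw [ae_iff]
  have hset : {y | ¬ 0 < h y} = h ⁻¹' {0} := by ext y; simp [pos_iff_ne_zero]
  rw [hset, withDensity_apply _ (hh (measurableSet_singleton 0))]
  have h2 : ∫⁻ y in h ⁻¹' {0}, h y ∂ν₀ = ∫⁻ _ in h ⁻¹' {0}, 0 ∂ν₀ :=
    setLIntegral_congr_fun (hh (measurableSet_singleton 0)) (fun y hy => hy)
  rw [h2, lintegral_zero]

set_option maxHeartbeats 2000000 in
lemma myRDaux {X Y : Type*}
    [MeasurableSpace X] [MeasurableSpace Y] [MeasurableSingletonClass Y]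
    (μ : Measure X) [IsProbabilityMeasure μ]
    (ρ : X × Y → ℝ≥0∞) (hρ : Measurable ρ)
    (hA2 : ∃ (ν : Measure Y) (π : Measure (X × Y)), IsProbabilityMeasure ν ∧
      IsCoupling π μ ν ∧ relEnt π (μ.prod ν) < ⊤ ∧ ∫⁻ q, ρ q ∂π < ⊤)
    (happrox : ∀ ε : ℝ, 0 < ε →
      ∃ (A : ℕ → Set X) (B : ℕ → Finset Y),
        Monotone A ∧ Monotone B ∧ (∀ n, MeasurableSet (A n)) ∧
        Tendsto (fun n => μ (A n)) atTop (𝓝 1) ∧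
        ∀ n, ∀ x ∈ A n, ∃ y ∈ B n, ρ (x, y) < ENNReal.ofReal ε)
    (D : ℝ) (hD : 0 < D) : RD μ ρ D < ⊤ := by
  obtain ⟨ν₀, π₀, hν₀, hcoup₀, hrel₀, hρ₀⟩ := hA2
  have hcond₀ : π₀ ≪ μ.prod ν₀ ∧
      Integrable (fun ω => Real.log ((π₀.rnDeriv (μ.prod ν₀)) ω).toReal) π₀ := by
    by_contra hc
    rw [relEnt, if_neg hc] at hrel₀
    exact lt_irrefl _ hrel₀
  obtain ⟨hac₀, hint₀⟩ := hcond₀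
  haveI hπ₀p : IsProbabilityMeasure π₀ := by
    constructor
    have h1 := Measure.fst_apply (ρ := π₀) MeasurableSet.univ
    simp only [Set.preimage_univ] at h1
    rw [← h1, hcoup₀.1]
    exact measure_univ
  have hY : Nonempty Y := by
    by_contra hY
    rw [not_nonempty_iff] at hY
    have h1 : ν₀ Set.univ = 1 := measure_univ
    rw [Set.univ_eq_empty_iff.2 hY] at h1
    simp at h1
  obtain ⟨A, B, hAmono, hBmono, hAmeas, hAtend, hAB⟩ := happrox (D/2) (by linarith)
  -- choose n with a small tail
  have hcompl : Tendsto (fun n => π₀ ((A n)ᶜ ×ˢ Set.univ)) atTop (𝓝 0) := by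
    have heq : ∀ n, π₀ ((A n)ᶜ ×ˢ Set.univ) = 1 - μ (A n) := by
      intro n
      have hpre : ((A n)ᶜ ×ˢ Set.univ : Set (X × Y)) = Prod.fst ⁻¹' (A n)ᶜ := by
        ext p; simp
      rw [hpre, ← Measure.fst_apply (hAmeas n).compl, hcoup₀.1,
        measure_compl (hAmeas n) (measure_ne_top μ _), measure_univ]
    simp_rw [heq]
    have h2 := ENNReal.Tendsto.sub (tendsto_const_nhds (x := (1:ℝ≥0∞)) (f := atTop))
      hAtend (Or.inl one_ne_top)
    simpa using h2
  have htail := tendsto_setLIntegral_zero hρ₀.ne hcompl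
  have hev : ∀ᶠ n in atTop,
      ∫⁻ p in ((A n)ᶜ ×ˢ Set.univ), ρ p ∂π₀ < ENNReal.ofReal (D/2) :=
    htail.eventually_lt_const (ENNReal.ofReal_pos.2 (by linarith))
  obtain ⟨n, hn⟩ := hev.exists
  -- the codebook
  set l : List Y := (B n).toList with hl
  set N : ℕ := l.length with hN
  set y0 : Y := Classical.arbitrary Y with hy0
  set yi : ℕ → Y := fun i => l.getD i y0 with hyi
  have hmem : ∀ y ∈ B n, ∃ i, i < N ∧ yi i = y := by
    intro y hy
    have hyl : y ∈ l := Finset.mem_toList.2 hy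
    obtain ⟨⟨i, hi⟩, hgety⟩ := List.mem_iff_get.1 hyl
    refine ⟨i, hi, ?_⟩
    simp only [hyi]
    rw [List.getD_eq_getElem?_getD, List.getElem?_eq_getElem hi, Option.getD_some]
    exact hgety
  -- the partition
  set T : ℕ → Set X := fun i => A n ∩ {x | ρ (x, yi i) < ENNReal.ofReal (D/2)} with hT
  have hTmeas : ∀ i, MeasurableSet (T i) := fun i =>
    (hAmeas n).inter (measurableSet_lt (hρ.comp measurable_prodMk_right) measurable_const)
  set S : ℕ → Set X := fun i => T i \ ⋃ (j : ℕ) (_ : j < i), T j with hS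
  have hSmeas : ∀ i, MeasurableSet (S i) := fun i =>
    (hTmeas i).diff (MeasurableSet.iUnion fun j => MeasurableSet.iUnion fun _ => hTmeas j)
  have hSsubT : ∀ i, S i ⊆ T i := fun i => Set.diff_subset
  have hSdisj : ∀ i j, i ≠ j → Disjoint (S i) (S j) := by
    have key : ∀ i j, i < j → Disjoint (S i) (S j) := by
      intro i j hij
      rw [Set.disjoint_left]
      intro x hxi hxj
      exact hxj.2 (Set.mem_iUnion.2 ⟨i, Set.mem_iUnion.2 ⟨hij, hSsubT i hxi⟩⟩)
    intro i j hij
    rcases hij.lt_or_gt with hlt | hlt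
    · exact key i j hlt
    · exact (key j i hlt).symm
  set U : Set X := ⋃ i ∈ Finset.range N, S i with hU
  have hUmeas : MeasurableSet U :=
    (Finset.range N).measurableSet_biUnion fun i _ => hSmeas i
  have hAU : A n ⊆ U := by
    intro x hx
    obtain ⟨y, hyB, hxy⟩ := hAB n x hx
    obtain ⟨i, hiN, hyieq⟩ := hmem y hyB
    have hP : ∃ k, k < N ∧ x ∈ T k := ⟨i, hiN, ⟨hx, by simp only [Set.mem_setOf_eq, hyieq]; exact hxy⟩⟩
    have hk := Nat.find_spec hP
    refine Set.mem_biUnion (Finset.mem_range.2 hk.1) ?_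
    refine ⟨hk.2, ?_⟩
    intro hxmem
    obtain ⟨j, hjmem⟩ := Set.mem_iUnion.1 hxmem
    obtain ⟨hjk, hxTj⟩ := Set.mem_iUnion.1 hjmem
    exact Nat.find_min hP hjk ⟨hjk.trans hk.1, hxTj⟩
  -- the measures
  set m : ℕ → Measure (X × Y) := fun i => (μ.restrict (S i)).prod (Measure.dirac (yi i)) with hm
  set π₁ : Measure (X × Y) := ∑ i ∈ Finset.range N, m i with hπ₁
  set π₂ : Measure (X × Y) := π₀.restrict (Uᶜ ×ˢ Set.univ) with hπ₂
  set πm : Measure (X × Y) := π₁ + π₂ with hπm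
  set ν : Measure Y := πm.snd with hν
  have hUsum : ∀ s : Set X, MeasurableSet s → ∑ i ∈ Finset.range N, μ (s ∩ S i) = μ (s ∩ U) := by
    intro s hs
    rw [hU, Set.inter_iUnion₂, measure_biUnion_finset
      (fun i _ j _ hij => ((hSdisj i j hij).mono Set.inter_subset_right Set.inter_subset_right))
      (fun i _ => hs.inter (hSmeas i))]
  have hπ₂rect : ∀ s : Set X, MeasurableSet s → π₂ (s ×ˢ Set.univ) = μ (s ∩ Uᶜ) := by
    intro s hs
    rw [hπ₂, Measure.restrict_apply (hs.prod MeasurableSet.univ), Set.prod_inter_prod,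
      Set.univ_inter]
    have hpre : ((s ∩ Uᶜ) ×ˢ Set.univ : Set (X × Y)) = Prod.fst ⁻¹' (s ∩ Uᶜ) := by
      ext p; simp
    rw [hpre, ← Measure.fst_apply (hs.inter hUmeas.compl), hcoup₀.1]
  have hmrect : ∀ i (s : Set X) (t : Set Y), MeasurableSet s →
      m i (s ×ˢ t) = μ (s ∩ S i) * (Measure.dirac (yi i)) t := by
    intro i s t hs
    rw [hm, Measure.prod_prod, Measure.restrict_apply hs]
  have hfst : πm.fst = μ := by
    ext s hs
    rw [Measure.fst_apply hs]
    have hpre : Prod.fst ⁻¹' s = (s ×ˢ Set.univ : Set (X × Y)) := by ext p; simp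
    rw [hpre, hπm, Measure.add_apply, hπ₁, Measure.finset_sum_apply]
    have h1 : ∀ i ∈ Finset.range N, m i (s ×ˢ Set.univ) = μ (s ∩ S i) := by
      intro i _
      rw [hmrect i s Set.univ hs, measure_univ, mul_one]
    rw [Finset.sum_congr rfl h1, hUsum s hs, hπ₂rect s hs]
    have := measure_inter_add_diff (μ := μ) s hUmeas
    rw [Set.diff_eq] at this
    exact this
  have hπprob : IsProbabilityMeasure πm := by
    constructor
    have h1 := Measure.fst_apply (ρ := πm) MeasurableSet.univ
    simp only [Set.preimage_univ] at h1
    rw [← h1, hfst]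
    exact measure_univ
  haveI := hπprob
  haveI hνprob : IsProbabilityMeasure ν := by rw [hν]; infer_instance
  have hdist : ∫⁻ q, ρ q ∂πm ≤ ENNReal.ofReal D := by
    rw [hπm, lintegral_add_measure, hπ₁, lintegral_finset_sum_measure]
    have hb1 : ∑ i ∈ Finset.range N, ∫⁻ q, ρ q ∂(m i) ≤ ENNReal.ofReal (D/2) := by
      have hterm : ∀ i ∈ Finset.range N, ∫⁻ q, ρ q ∂(m i) ≤ ENNReal.ofReal (D/2) * μ (S i) := by
        intro i _
        rw [hm, lintegral_prod _ hρ.aemeasurable]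
        have hinner : ∀ x : X, ∫⁻ y', ρ (x, y') ∂(Measure.dirac (yi i)) = ρ (x, yi i) :=
          fun x => lintegral_dirac' _ (hρ.comp measurable_prodMk_left)
        simp_rw [hinner]
        calc ∫⁻ x in S i, ρ (x, yi i) ∂μ
            ≤ ∫⁻ _ in S i, ENNReal.ofReal (D/2) ∂μ :=
              setLIntegral_mono measurable_const (fun x hx => ((hSsubT i hx).2).le)
          _ = ENNReal.ofReal (D/2) * μ (S i) := setLIntegral_const _ _
      calc ∑ i ∈ Finset.range N, ∫⁻ q, ρ q ∂(m i)
          ≤ ∑ i ∈ Finset.range N, ENNReal.ofReal (D/2) * μ (S i) := Finset.sum_le_sum hterm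
        _ = ENNReal.ofReal (D/2) * ∑ i ∈ Finset.range N, μ (S i) := by rw [Finset.mul_sum]
        _ = ENNReal.ofReal (D/2) * μ U := by
            rw [hU, measure_biUnion_finset (fun i _ j _ hij => hSdisj i j hij)
              (fun i _ => hSmeas i)]
        _ ≤ ENNReal.ofReal (D/2) * 1 := mul_le_mul_right prob_le_one _
        _ = ENNReal.ofReal (D/2) := mul_one _
    have hb2 : ∫⁻ q, ρ q ∂π₂ ≤ ENNReal.ofReal (D/2) := by
      rw [hπ₂]
      calc ∫⁻ q in Uᶜ ×ˢ Set.univ, ρ q ∂π₀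
          ≤ ∫⁻ q in (A n)ᶜ ×ˢ Set.univ, ρ q ∂π₀ :=
            lintegral_mono_set (Set.prod_mono (Set.compl_subset_compl.2 hAU) subset_rfl)
        _ ≤ ENNReal.ofReal (D/2) := hn.le
    calc (∑ i ∈ Finset.range N, ∫⁻ q, ρ q ∂(m i)) + ∫⁻ q, ρ q ∂π₂
        ≤ ENNReal.ofReal (D/2) + ENNReal.ofReal (D/2) := add_le_add hb1 hb2
      _ = ENNReal.ofReal D := by
          rw [← ENNReal.ofReal_add (by linarith) (by linarith)]
          norm_num
  -- density machinery
  set g₀ : X × Y → ℝ≥0∞ := π₀.rnDeriv (μ.prod ν₀) with hg₀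
  have hg₀meas : Measurable g₀ := Measure.measurable_rnDeriv _ _
  have hπ₀d : (μ.prod ν₀).withDensity g₀ = π₀ := Measure.withDensity_rnDeriv_eq _ _ hac₀
  have hUYmeas : MeasurableSet (Uᶜ ×ˢ (Set.univ : Set Y)) := hUmeas.compl.prod MeasurableSet.univ
  set g₂ : X × Y → ℝ≥0∞ := (Uᶜ ×ˢ (Set.univ : Set Y)).indicator g₀ with hg₂
  have hg₂meas : Measurable g₂ := hg₀meas.indicator hUYmeas
  have hπ₂d : (μ.prod ν₀).withDensity g₂ = π₂ := by
    rw [hg₂, withDensity_indicator hUYmeas, ← restrict_withDensity hUYmeas, hπ₀d, hπ₂]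
  set h : Y → ℝ≥0∞ := fun y => ∫⁻ x, g₂ (x, y) ∂μ with hh
  have hhmeas : Measurable h :=
    Measurable.lintegral_prod_left (f := fun x y => g₂ (x, y)) (by exact hg₂meas)
  set ν₂ : Measure Y := π₂.snd with hν₂
  have hν₂d : ν₂ = ν₀.withDensity h := by
    rw [hν₂, ← hπ₂d]
    exact mySnd_withDensity μ ν₀ hg₂meas
  have hsndadd : ν = π₁.snd + ν₂ := by
    rw [hν, hν₂, hπm, Measure.snd, Measure.map_add _ _ measurable_snd]
    rfl
  have hν₂le : ν₂ ≤ ν := by rw [hsndadd]; exact Measure.le_add_left le_rfl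
  have hacν₂ν : ν₂ ≪ ν := Measure.absolutelyContinuous_of_le hν₂le
  haveI : IsFiniteMeasure ν₂ := by
    constructor
    exact lt_of_le_of_lt (Measure.le_iff'.1 hν₂le Set.univ) (measure_lt_top ν _)
  set w : Y → ℝ≥0∞ := ν₂.rnDeriv ν with hw
  have hwmeas : Measurable w := Measure.measurable_rnDeriv _ _
  have hwd2 : ν.withDensity w = ν₂ := Measure.withDensity_rnDeriv_eq _ _ hacν₂ν
  -- h ≤ 1 a.e. ν₀
  have hh1 : ∀ᵐ y ∂ν₀, h y ≤ 1 := by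
    set h₀ : Y → ℝ≥0∞ := fun y => ∫⁻ x, g₀ (x, y) ∂μ with hh₀
    have hh₀meas : Measurable h₀ :=
      Measurable.lintegral_prod_left (f := fun x y => g₀ (x, y)) (by exact hg₀meas)
    have hsnd₀ : ν₀.withDensity h₀ = ν₀ := by
      rw [← mySnd_withDensity μ ν₀ hg₀meas, hπ₀d, hcoup₀.2]
    have h₀one : h₀ =ᵐ[ν₀] 1 := by
      have h1 : h₀ =ᵐ[ν₀] (ν₀.withDensity h₀).rnDeriv ν₀ :=
        (Measure.rnDeriv_withDensity ν₀ hh₀meas).symm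
      rw [hsnd₀] at h1
      exact h1.trans (Measure.rnDeriv_self ν₀)
    filter_upwards [h₀one] with y hy
    calc h y ≤ h₀ y := lintegral_mono fun x => Set.indicator_le_self _ _ (x, y)
      _ = 1 := hy
  -- the density K
  set K₁ : X × Y → ℝ≥0∞ := fun p => ∑ i ∈ Finset.range N,
    (S i).indicator (fun _ => (1:ℝ≥0∞)) p.1 *
      ({yi i} : Set Y).indicator (fun _ => (ν {yi i})⁻¹) p.2 with hK₁
  have hK₁meas : Measurable K₁ := by
    apply Finset.measurable_sum
    intro i _
    exact ((measurable_const.indicator (hSmeas i)).comp measurable_fst).mul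
      ((measurable_const.indicator (measurableSet_singleton _)).comp measurable_snd)
  set K₂ : X × Y → ℝ≥0∞ := fun p => g₂ p * ((h p.2)⁻¹ * w p.2) with hK₂
  have hK₂meas : Measurable K₂ :=
    hg₂meas.mul (((hhmeas.comp measurable_snd).inv).mul (hwmeas.comp measurable_snd))
  set K : X × Y → ℝ≥0∞ := fun p => K₁ p + K₂ p with hK
  have hKmeas : Measurable K := hK₁meas.add hK₂meas
  have hνyge : ∀ i ∈ Finset.range N, μ (S i) ≤ ν {yi i} := by
    intro i hi
    have h3 : m i (Prod.snd ⁻¹' {yi i}) = μ (S i) := by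
      have hpre : Prod.snd ⁻¹' ({yi i} : Set Y) = (Set.univ : Set X) ×ˢ {yi i} := by
        ext ⟨a, b⟩; simp [eq_comm]
      rw [hpre, hmrect i Set.univ {yi i} MeasurableSet.univ, Set.univ_inter]
      simp
    rw [Measure.snd_apply (measurableSet_singleton _), ← h3, hπm, Measure.add_apply,
      hπ₁, Measure.finset_sum_apply]
    calc m i (Prod.snd ⁻¹' {yi i})
        ≤ ∑ j ∈ Finset.range N, m j (Prod.snd ⁻¹' {yi i}) :=
          Finset.single_le_sum (f := fun j => m j (Prod.snd ⁻¹' {yi i}))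
            (fun j _ => zero_le) hi
      _ ≤ _ := le_self_add
  have hwdK : (μ.prod ν).withDensity K = πm := by
    have hsplit : (μ.prod ν).withDensity K
        = (μ.prod ν).withDensity K₁ + (μ.prod ν).withDensity K₂ := by
      exact withDensity_add_left hK₁meas K₂
    rw [hsplit, hπm]
    congr 1
    · refine Eq.trans (myWithDensity_finsetSum (μ.prod ν) (Finset.range N)
        (fun i p => (S i).indicator (fun _ => (1:ℝ≥0∞)) p.1 *
          ({yi i} : Set Y).indicator (fun _ => (ν {yi i})⁻¹) p.2)
        (fun i _ =>
          ((measurable_const.indicator (hSmeas i)).comp measurable_fst).mul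
            ((measurable_const.indicator (measurableSet_singleton _)).comp measurable_snd))) ?_
      refine Finset.sum_congr rfl fun i hi => ?_
      exact myDiracProdDensity μ ν (S i) (hSmeas i) (yi i) (hνyge i hi)
    · have hkey := myPart2Density μ ν₀ ν (g := g₂) hg₂meas (by rw [hπ₂d, ← hν₂]; exact hν₂le) hh1
      rw [hπ₂d] at hkey
      rw [← hν₂] at hkey
      exact hkey
  have hacK : πm ≪ μ.prod ν := by
    rw [← hwdK]; exact withDensity_absolutelyContinuous _ _
  have hrnd : πm.rnDeriv (μ.prod ν) =ᵐ[μ.prod ν] K := by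
    rw [← hwdK]
    exact Measure.rnDeriv_withDensity _ hKmeas
  have hrndπ : πm.rnDeriv (μ.prod ν) =ᵐ[πm] K := hrnd.filter_mono hacK.ae_le
  have hIK : Integrable (fun p => Real.log ((K p).toReal)) πm := by
    rw [hπm, integrable_add_measure]
    constructor
    · rw [hπ₁, integrable_finset_sum_measure]
      intro i hi
      by_cases hz : μ (S i) = 0
      · have hrz : μ.restrict (S i) = 0 := Measure.restrict_eq_zero.2 hz
        have hmz : m i = 0 := by rw [hm]; simp [hrz]
        rw [hmz]
        exact integrable_zero_measure
      · haveI : IsFiniteMeasure (m i) := by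
          constructor
          rw [show (Set.univ : Set (X × Y)) = (Set.univ : Set X) ×ˢ (Set.univ : Set Y) from
            (Set.univ_prod_univ).symm, hmrect i _ _ MeasurableSet.univ, Set.univ_inter]
          exact ENNReal.mul_lt_top (measure_lt_top _ _) (measure_lt_top _ _)
        have hae : ∀ᵐ p ∂(m i), p.1 ∈ S i ∧ p.2 = yi i := by
          rw [ae_iff]
          have hset : {p : X × Y | ¬(p.1 ∈ S i ∧ p.2 = yi i)}
              = (S i ×ˢ ({yi i} : Set Y))ᶜ := by
            ext p
            simp only [Set.mem_setOf_eq, Set.mem_compl_iff, Set.mem_prod,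
              Set.mem_singleton_iff]
          rw [hset]
          have h1 : m i (S i ×ˢ ({yi i} : Set Y)) = m i Set.univ := by
            rw [hmrect i _ _ (hSmeas i), Set.inter_self,
              show (Set.univ : Set (X × Y)) = (Set.univ : Set X) ×ˢ (Set.univ : Set Y) from
                (Set.univ_prod_univ).symm, hmrect i _ _ MeasurableSet.univ, Set.univ_inter]
            simp
          rw [measure_compl ((hSmeas i).prod (measurableSet_singleton _))
            (measure_ne_top _ _), h1, tsub_self]
        have haeK : (fun p => Real.log ((K p).toReal)) =ᵐ[m i]
            (fun _ => Real.log (((ν {yi i})⁻¹).toReal)) := by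
          filter_upwards [hae] with p hp
          have hK2 : K₂ p = 0 := by
            have hg2 : g₂ p = 0 := by
              apply Set.indicator_of_notMem
              intro hmem
              exact hmem.1 (Set.mem_biUnion hi hp.1)
            have h2 : K₂ p = g₂ p * ((h p.2)⁻¹ * w p.2) := rfl
            rw [h2, hg2, zero_mul]
          have hK1 : K₁ p = (ν {yi i})⁻¹ := by
            have h1 : K₁ p = ∑ j ∈ Finset.range N,
                (S j).indicator (fun _ => (1:ℝ≥0∞)) p.1 *
                  ({yi j} : Set Y).indicator (fun _ => (ν {yi j})⁻¹) p.2 := rfl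
            rw [h1, Finset.sum_eq_single i ?_ ?_]
            · rw [Set.indicator_of_mem hp.1,
                Set.indicator_of_mem (show p.2 ∈ ({yi i} : Set Y) from hp.2 ▸ rfl), one_mul]
            · intro j _ hji
              rw [Set.indicator_of_notMem
                (fun hxj => (Set.disjoint_left.1 (hSdisj j i hji)) hxj hp.1), zero_mul]
            · intro hnot
              exact absurd hi hnot
          have h0 : K p = K₁ p + K₂ p := rfl
          rw [h0, hK2, add_zero, hK1]
        exact (integrable_const _).congr haeK.symm
    · have hπ₂le : π₂ ≤ π₀ := by rw [hπ₂]; exact Measure.restrict_le_self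
      have hacπ₂ : π₂ ≪ π₀ := Measure.absolutelyContinuous_of_le hπ₂le
      have hae2 : ∀ᵐ p ∂π₂, p.1 ∈ Uᶜ := by
        have h1 := ae_restrict_mem (μ := π₀) hUYmeas
        rw [← hπ₂] at h1
        filter_upwards [h1] with p hp
        exact hp.1
      have hg₀pos : ∀ᵐ p ∂π₂, 0 < g₀ p :=
        (Measure.rnDeriv_pos hac₀).filter_mono hacπ₂.ae_le
      have hg₀fin : ∀ᵐ p ∂π₂, g₀ p < ⊤ :=
        ((Measure.rnDeriv_lt_top π₀ (μ.prod ν₀)).filter_mono hac₀.ae_le).filter_mono hacπ₂.ae_le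
      have htrans : ∀ (P : Y → Prop), MeasurableSet {y | P y} → (∀ᵐ y ∂ν₂, P y) →
          ∀ᵐ p ∂π₂, P p.2 := by
        intro P hPm hP
        have h2 : ν₂ = Measure.map Prod.snd π₂ := rfl
        rw [h2] at hP
        exact (ae_map_iff measurable_snd.aemeasurable hPm).1 hP
      have hacν₂ν₀ : ν₂ ≪ ν₀ := by
        rw [hν₂d]; exact withDensity_absolutelyContinuous _ _
      have hhle : ∀ᵐ y ∂ν₂, h y ≤ 1 := hh1.filter_mono hacν₂ν₀.ae_le
      have hhpos : ∀ᵐ y ∂ν₂, 0 < h y := by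
        rw [hν₂d]; exact myAEPosWithDensity ν₀ hhmeas
      have hwpos : ∀ᵐ y ∂ν₂, 0 < w y := by
        rw [← hwd2]; exact myAEPosWithDensity ν hwmeas
      have hwfin : ∀ᵐ y ∂ν₂, w y < ⊤ :=
        (Measure.rnDeriv_lt_top ν₂ ν).filter_mono hacν₂ν.ae_le
      have hp1 : ∀ᵐ p ∂π₂, 0 < h p.2 :=
        htrans _ (measurableSet_lt measurable_const hhmeas) hhpos
      have hp2 : ∀ᵐ p ∂π₂, h p.2 ≤ 1 :=
        htrans _ (measurableSet_le hhmeas measurable_const) hhle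
      have hp3 : ∀ᵐ p ∂π₂, 0 < w p.2 :=
        htrans _ (measurableSet_lt measurable_const hwmeas) hwpos
      have hp4 : ∀ᵐ p ∂π₂, w p.2 < ⊤ :=
        htrans _ (measurableSet_lt hwmeas measurable_const) hwfin
      have haeEq : (fun p => Real.log ((K p).toReal)) =ᵐ[π₂]
          (fun p => Real.log ((g₀ p).toReal) +
            (Real.log (((h p.2)⁻¹).toReal) + Real.log ((w p.2).toReal))) := by
        filter_upwards [hae2, hg₀pos, hg₀fin, hp1, hp2, hp3, hp4]
          with p hpU hg0 hgt hh0 hhle1 hw0 hwt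
        have hK1 : K₁ p = 0 := by
          have h1 : K₁ p = ∑ j ∈ Finset.range N,
              (S j).indicator (fun _ => (1:ℝ≥0∞)) p.1 *
                ({yi j} : Set Y).indicator (fun _ => (ν {yi j})⁻¹) p.2 := rfl
          rw [h1]
          refine Finset.sum_eq_zero fun j hj => ?_
          rw [Set.indicator_of_notMem (fun hmem => hpU (Set.mem_biUnion hj hmem)), zero_mul]
        have hg2 : g₂ p = g₀ p :=
          Set.indicator_of_mem (Set.mem_prod.2 ⟨hpU, Set.mem_univ _⟩) _
        have hKp : K p = g₀ p * ((h p.2)⁻¹ * w p.2) := by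
          have h0 : K p = K₁ p + K₂ p := rfl
          have h2 : K₂ p = g₂ p * ((h p.2)⁻¹ * w p.2) := rfl
          rw [h0, hK1, zero_add, h2, hg2]
        have hgne : (g₀ p).toReal ≠ 0 := (ENNReal.toReal_pos hg0.ne' hgt.ne).ne'
        have hhne : ((h p.2)⁻¹).toReal ≠ 0 := by
          rw [ENNReal.toReal_inv]
          exact inv_ne_zero
            (ENNReal.toReal_pos hh0.ne' (lt_of_le_of_lt hhle1 one_lt_top).ne).ne'
        have hwne : (w p.2).toReal ≠ 0 := (ENNReal.toReal_pos hw0.ne' hwt.ne).ne'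
        rw [hKp, ENNReal.toReal_mul, ENNReal.toReal_mul,
          Real.log_mul hgne (mul_ne_zero hhne hwne), Real.log_mul hhne hwne]
      have hi1 : Integrable (fun p => Real.log ((g₀ p).toReal)) π₂ := by
        rw [hπ₂]; exact hint₀.restrict
      have hbase2 : Integrable (fun y => Real.log ((h y).toReal)) ν₂ := by
        rw [hν₂d]; exact myIntLogDensity ν₀ hhmeas hh1
      have hbase3 : Integrable (fun y => Real.log ((w y).toReal)) ν₂ := by
        rw [← hwd2]
        exact myIntLogDensity ν hwmeas (Measure.rnDeriv_le_one_of_le hν₂le)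
      have htr : ∀ (f : Y → ℝ), Measurable f → Integrable f ν₂ →
          Integrable (fun p : X × Y => f p.2) π₂ := by
        intro f hf hIf
        have h2 : ν₂ = Measure.map Prod.snd π₂ := rfl
        rw [h2] at hIf
        exact (integrable_map_measure hf.aestronglyMeasurable
          measurable_snd.aemeasurable).1 hIf
      have hi2 : Integrable (fun p : X × Y => Real.log (((h p.2)⁻¹).toReal)) π₂ := by
        have heq2 : (fun y => Real.log (((h y)⁻¹).toReal))
            = fun y => -Real.log ((h y).toReal) := by
          funext y; rw [ENNReal.toReal_inv, Real.log_inv]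
        have h3 : Integrable (fun y => Real.log (((h y)⁻¹).toReal)) ν₂ := by
          rw [heq2]; exact hbase2.neg
        exact htr (fun y => Real.log (((h y)⁻¹).toReal)) (Real.measurable_log.comp (hhmeas.inv.ennreal_toReal)) h3
      have hi3 : Integrable (fun p : X × Y => Real.log ((w p.2).toReal)) π₂ :=
        htr (fun y => Real.log ((w y).toReal)) (Real.measurable_log.comp (hwmeas.ennreal_toReal)) hbase3
      exact (hi1.add (hi2.add hi3)).congr haeEq.symm

  have hrelEnt : relEnt πm (μ.prod ν) < ⊤ := by
    have hIcond : Integrable (fun ω => Real.log ((πm.rnDeriv (μ.prod ν)) ω).toReal) πm := by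
      refine hIK.congr ?_
      filter_upwards [hrndπ] with p hp
      rw [hp]
    rw [relEnt, if_pos ⟨hacK, hIcond⟩]
    exact EReal.coe_lt_top _
  calc RD μ ρ D ≤ relEnt πm (μ.prod ν) := by
        refine iInf_le_of_le ν ?_
        refine iInf_le_of_le hνprob ?_
        refine iInf_le_of_le πm ?_
        refine iInf_le_of_le ⟨hfst, hν.symm⟩ ?_
        exact iInf_le _ hdist
    _ < ⊤ := hrelEnt

/-- under the approximation hypothesis by finite codebooks,
`R(D)` is finite for all `D > 0`, i.e. `D_min = 0`. -/
theorem rd_finite_of_finite_codebooks {X Y : Type*}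
    [MeasurableSpace X] [TopologicalSpace X] [PolishSpace X] [BorelSpace X]
    [MeasurableSpace Y] [TopologicalSpace Y] [PolishSpace Y] [BorelSpace Y]
    (μ : Measure X) [IsProbabilityMeasure μ]
    (ρ : X × Y → ℝ≥0∞) (hρ : Measurable ρ)
    (hA1 : ∀ x : X, ⨅ y : Y, ρ (x, y) = 0)
    (hA2 : ∃ (ν : Measure Y) (π : Measure (X × Y)), IsProbabilityMeasure ν ∧
      IsCoupling π μ ν ∧ relEnt π (μ.prod ν) < ⊤ ∧ ∫⁻ q, ρ q ∂π < ⊤)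
    (happrox : ∀ ε : ℝ, 0 < ε →
      ∃ (A : ℕ → Set X) (B : ℕ → Finset Y),
        Monotone A ∧ Monotone B ∧ (∀ n, MeasurableSet (A n)) ∧
        Tendsto (fun n => μ (A n)) atTop (𝓝 1) ∧
        ∀ n, ∀ x ∈ A n, ∃ y ∈ B n, ρ (x, y) < ENNReal.ofReal ε) :
    (∀ D : ℝ, 0 < D → RD μ ρ D < ⊤) ∧ Dmin μ ρ = 0 := by
  have haux : ∀ D : ℝ, 0 < D → RD μ ρ D < ⊤ := fun D hD => myRDaux μ ρ hρ hA2 happrox D hD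
  refine ⟨haux, ?_⟩
  have hsub : Set.Ioi (0:ℝ) ⊆ {D : ℝ | 0 ≤ D ∧ RD μ ρ D < ⊤} :=
    fun D hD => ⟨le_of_lt hD, haux D hD⟩
  have hbdd : BddBelow {D : ℝ | 0 ≤ D ∧ RD μ ρ D < ⊤} := ⟨0, fun x hx => hx.1⟩
  show sInf {D : ℝ | 0 ≤ D ∧ RD μ ρ D < ⊤} = 0
  refine le_antisymm ?_ ?_
  · calc sInf {D : ℝ | 0 ≤ D ∧ RD μ ρ D < ⊤} ≤ sInf (Set.Ioi (0:ℝ)) :=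
        csInf_le_csInf hbdd Set.nonempty_Ioi hsub
      _ = 0 := csInf_Ioi
  · exact le_csInf ⟨1, hsub (by norm_num : (1:ℝ) ∈ Set.Ioi 0)⟩ fun x hx => hx.1
end
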